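/- arXiv:2108.06260 — 2 statements merged into one kernel-verified Lean document; each statement's English description precedes it below -/
import Mathlib

section
/- For every nonnegative integer n and all real x, Bel_{n+1,λ}(x) = x·(Bel'_{n,λ}(x) + Bel_{n,λ}(x)) − nλ·Bel_{n,λ}(x), where Bel'_{n,λ} denotes the derivative of Bel_{n,λ}. -/
open Finset

/-!
Expanding `(x)_{n+1,λ} = (x - nλ)(x)_{n,λ}` in the falling-factorial basis with
`(x - μ)(x)_k = (x)_{k+1} + (k - μ)(x)_k` gives the triangular recurrence
`S_{2,λ}(n+1,k) = S_{2,λ}(n,k-1) + (k - nλ) S_{2,λ}(n,k)`, the coefficients being unique because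
`(k)_j = 0` for `j > k` while `(k)_k > 0`. Replacing `(x)_k` by `x^k`, the shift `k ↦ k+1` becomes
multiplication by `x`, and the factor `k` becomes the Euler operator `x d/dx`.
-/

/-- Degenerate falling factorial `(x)_{n,λ}`. -/
noncomputable def degFall (lam x : ℝ) (n : ℕ) : ℝ := ∏ i ∈ Finset.range n, (x - i * lam)

/-- Ordinary falling factorial `(x)_k`. -/
noncomputable def fall (x : ℝ) (k : ℕ) : ℝ := ∏ i ∈ Finset.range k, (x - i)

lemma degFall_succ (lam x : ℝ) (n : ℕ) :
    degFall lam x (n + 1) = (x - n * lam) * degFall lam x n := by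
  rw [degFall, prod_range_succ, mul_comm, degFall]

lemma fall_succ (x : ℝ) (k : ℕ) : fall x (k + 1) = fall x k * (x - k) :=
  prod_range_succ _ k

lemma sub_mul_fall (μ x : ℝ) (k : ℕ) :
    (x - μ) * fall x k = fall x (k + 1) + (k - μ) * fall x k := by
  rw [fall_succ]
  ring

lemma fall_natCast_of_lt {k j : ℕ} (h : k < j) : fall (k : ℝ) j = 0 :=
  prod_eq_zero (mem_range.mpr h) (sub_self _)

lemma fall_natCast_self_pos (k : ℕ) : 0 < fall (k : ℝ) k :=
  prod_pos fun _ hi => sub_pos.mpr (Nat.cast_lt.mpr (mem_range.mp hi))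

lemma eq_zero_of_sum_mul_fall_eq_zero {N : ℕ} {a : ℕ → ℝ}
    (h : ∀ x : ℝ, ∑ k ∈ range N, a k * fall x k = 0) : ∀ k < N, a k = 0 := by
  intro k
  induction k using Nat.strong_induction_on with
  | _ k ih =>
    intro hk
    -- evaluating at `x = k` kills the terms `j > k` by vanishing and `j < k` by induction
    have hsum : ∑ j ∈ range N, a j * fall (k : ℝ) j = a k * fall (k : ℝ) k := by
      refine sum_eq_single k (fun j hj hjk => ?_) (fun hk' => absurd (mem_range.mpr hk) hk')
      rcases lt_or_gt_of_ne hjk with hlt | hgt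
      · rw [ih j hlt (mem_range.mp hj), zero_mul]
      · rw [fall_natCast_of_lt hgt, mul_zero]
    have hk0 := h k
    rw [hsum] at hk0
    exact (mul_eq_zero.mp hk0).resolve_right (fall_natCast_self_pos k).ne'

lemma eq_of_sum_mul_fall_eq {N : ℕ} {a b : ℕ → ℝ}
    (h : ∀ x : ℝ, ∑ k ∈ range N, a k * fall x k = ∑ k ∈ range N, b k * fall x k) :
    ∀ k < N, a k = b k := by
  have hdiff : ∀ x : ℝ, ∑ k ∈ range N, (a k - b k) * fall x k = 0 := fun x => by
    simp only [sub_mul, sum_sub_distrib, h x, sub_self]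
  exact fun k hk => sub_eq_zero.mp (eq_zero_of_sum_mul_fall_eq_zero hdiff k hk)

/-- Coefficients of `(x - μ) ∑_{k<N} a k X_k` when `(x - μ) X_k = X_{k+1} + (k - μ) X_k`. -/
def mulSubCoeff (μ : ℝ) (N : ℕ) (a : ℕ → ℝ) (k : ℕ) : ℝ :=
  (if k < N then (k - μ) * a k else 0) + (if k = 0 then 0 else a (k - 1))

lemma sum_mulSubCoeff_mul (μ : ℝ) (N : ℕ) (a g : ℕ → ℝ) :
    ∑ k ∈ range (N + 1), mulSubCoeff μ N a k * g k =
      ∑ k ∈ range N, a k * (g (k + 1) + (k - μ) * g k) := by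
  have hdiag : ∑ k ∈ range (N + 1), (if k < N then (k - μ) * a k else 0) * g k =
      ∑ k ∈ range N, (k - μ) * a k * g k := by
    rw [sum_range_succ, if_neg (lt_irrefl N), zero_mul, add_zero]
    exact sum_congr rfl fun k hk => by rw [if_pos (mem_range.mp hk)]
  have hshift : ∑ k ∈ range (N + 1), (if k = 0 then 0 else a (k - 1)) * g k =
      ∑ k ∈ range N, a k * g (k + 1) := by
    simp [sum_range_succ']
  simp only [mulSubCoeff, add_mul, sum_add_distrib, hdiag, hshift, mul_add]
  rw [add_comm]
  congr 1
  exact sum_congr rfl fun k _ => by ring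

lemma mul_deriv_sum_mul_pow (N : ℕ) (a : ℕ → ℝ) (x : ℝ) :
    x * deriv (fun y => ∑ k ∈ range N, a k * y ^ k) x =
      ∑ k ∈ range N, a k * (k * x ^ k) := by
  have hderiv : HasDerivAt (fun y => ∑ k ∈ range N, a k * y ^ k)
      (∑ k ∈ range N, a k * (k * x ^ (k - 1))) x :=
    HasDerivAt.fun_sum fun k _ => (hasDerivAt_pow k x).const_mul (a k)
  rw [hderiv.deriv, mul_sum]
  refine sum_congr rfl fun k _ => ?_
  cases k with
  | zero => simp
  | succ k => rw [Nat.add_sub_cancel, pow_succ]; ring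

theorem sum_mul_pow_eq_of_sum_mul_fall_eq_sub_mul (μ : ℝ) (N : ℕ) (a b : ℕ → ℝ)
    (h : ∀ y : ℝ,
      ∑ k ∈ range (N + 1), b k * fall y k = (y - μ) * ∑ k ∈ range N, a k * fall y k)
    (x : ℝ) :
    ∑ k ∈ range (N + 1), b k * x ^ k =
      x * (deriv (fun y => ∑ k ∈ range N, a k * y ^ k) x + ∑ k ∈ range N, a k * x ^ k) -
        μ * ∑ k ∈ range N, a k * x ^ k := by
  have hfall : ∀ y : ℝ, ∑ k ∈ range (N + 1), b k * fall y k =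
      ∑ k ∈ range (N + 1), mulSubCoeff μ N a k * fall y k := fun y => by
    simp only [h y, sum_mulSubCoeff_mul, mul_sum, ← sub_mul_fall]
    exact sum_congr rfl fun k _ => by ring
  have hcoeff := eq_of_sum_mul_fall_eq hfall
  calc ∑ k ∈ range (N + 1), b k * x ^ k
      = ∑ k ∈ range (N + 1), mulSubCoeff μ N a k * x ^ k :=
        sum_congr rfl fun k hk => by rw [hcoeff k (mem_range.mp hk)]
    _ = ∑ k ∈ range N, a k * (x ^ (k + 1) + (k - μ) * x ^ k) := sum_mulSubCoeff_mul μ N a _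
    _ = _ := by
        rw [mul_add, mul_deriv_sum_mul_pow, mul_sum, mul_sum, ← sum_add_distrib,
          ← sum_sub_distrib]
        exact sum_congr rfl fun k _ => by ring

/-- with `Bel_{n,λ}(x) = ∑_{k=0}^n S_{2,λ}(n,k) x^k`, one has
`Bel_{n+1,λ}(x) = x (Bel'_{n,λ}(x) + Bel_{n,λ}(x)) − nλ Bel_{n,λ}(x)`. -/
theorem degenerate_bell_recurrence_deriv (lam : ℝ) (S2 : ℕ → ℕ → ℝ)
    (hS2 : ∀ (n : ℕ) (x : ℝ), degFall lam x n = ∑ k ∈ range (n + 1), S2 n k * fall x k)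
    (n : ℕ) (x : ℝ) :
    ∑ k ∈ range (n + 2), S2 (n + 1) k * x ^ k =
      x * (deriv (fun y => ∑ k ∈ range (n + 1), S2 n k * y ^ k) x +
            ∑ k ∈ range (n + 1), S2 n k * x ^ k) -
        n * lam * ∑ k ∈ range (n + 1), S2 n k * x ^ k := by
  refine sum_mul_pow_eq_of_sum_mul_fall_eq_sub_mul (n * lam) (n + 1) (S2 n) (S2 (n + 1))
    (fun y => ?_) x
  rw [← hS2, ← hS2, degFall_succ]
end

section
/- For every nonnegative integer n and all real x, Bel_{n+1,λ}(x) = x · ∑_{m=0}^{n} C(n,m) · Bel_{m,λ}(x) · (1)_{n-m+1,λ}. -/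
open Finset

/-- Degenerate Bell polynomial `Bel_{n,λ}(x) = e^{-x} ∑_{k≥0} (k)_{n,λ} x^k / k!`. -/
noncomputable def Bel (lam x : ℝ) (n : ℕ) : ℝ :=
  Real.exp (-x) * ∑' k : ℕ, degFall lam (k : ℝ) n * x ^ k / (Nat.factorial k)

/-!
Since `(k)_{n+1,λ} = k (k - λ)_{n,λ}` and `k / k! = 1 / (k-1)!`, shifting the summation index gives
`Bel_{n+1,λ}(x) = x e^{-x} ∑_k (k + 1 - λ)_{n,λ} x^k / k!`. The degenerate falling factorials are of
binomial type, `(a + b)_{n,λ} = ∑_m C(n,m) (a)_{m,λ} (b)_{n-m,λ}`; expanding `(k + (1 - λ))_{n,λ}` this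
way and using `(1 - λ)_{n-m,λ} = (1)_{n-m+1,λ}` yields the recurrence.
-/

open scoped Nat

lemma degFall_succ_right (lam y : ℝ) (n : ℕ) :
    degFall lam y (n + 1) = degFall lam y n * (y - n * lam) :=
  prod_range_succ _ n

lemma degFall_succ_left (lam y : ℝ) (n : ℕ) :
    degFall lam y (n + 1) = y * degFall lam (y - lam) n := by
  rw [degFall, prod_range_succ', mul_comm, degFall]
  congr 1
  · simp
  · exact prod_congr rfl fun i _ => by push_cast; ring

lemma degFall_add (lam a b : ℝ) (n : ℕ) :
    degFall lam (a + b) n =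
      ∑ m ∈ range (n + 1), (n.choose m : ℝ) * (degFall lam a m * degFall lam b (n - m)) := by
  induction n with
  | zero => simp [degFall]
  | succ n ih =>
    rw [sum_choose_succ_mul (fun i j => degFall lam a i * degFall lam b j), ← sum_add_distrib,
      degFall_succ_right, ih, sum_mul]
    refine sum_congr rfl fun m hm => ?_
    have hmn : m ≤ n := Nat.lt_succ_iff.mp (mem_range.mp hm)
    rw [Nat.succ_sub hmn, degFall_succ_right lam a m, degFall_succ_right lam b (n - m),
      Nat.cast_sub hmn]
    ring

lemma abs_degFall_le (lam y : ℝ) (n : ℕ) : |degFall lam y n| ≤ (|y| + n * |lam|) ^ n := by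
  rw [degFall, abs_prod]
  calc ∏ i ∈ range n, |y - i * lam| ≤ ∏ _i ∈ range n, (|y| + n * |lam|) := by
        refine prod_le_prod (fun _ _ => abs_nonneg _) fun i hi => ?_
        have hin : (i : ℝ) ≤ n := by exact_mod_cast (mem_range.mp hi).le
        calc |y - i * lam| ≤ |y| + i * |lam| := by simpa [abs_mul] using abs_sub y (i * lam)
          _ ≤ |y| + n * |lam| := by gcongr
    _ = (|y| + n * |lam|) ^ n := by rw [prod_const, card_range]

lemma summable_degFall_mul_pow_div_factorial (lam x : ℝ) (n : ℕ) :
    Summable fun k : ℕ => degFall lam k n * x ^ k / k ! := by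
  refine .of_norm_bounded
    ((Real.summable_pow_div_factorial (Real.exp 1 * |x|)).mul_left (n ! * Real.exp (n * |lam|)))
    fun k => ?_
  -- `t ^ n ≤ n! e^t` turns the polynomial growth of `(k)_{n,λ}` into the geometric factor `e^k`.
  have hpow : (k + n * |lam|) ^ n ≤ n ! * Real.exp (k + n * |lam|) := by
    have := Real.pow_div_factorial_le_exp (x := k + n * |lam|) (by positivity) n
    rw [div_le_iff₀ (by positivity)] at this
    linarith
  calc ‖degFall lam k n * x ^ k / (k ! : ℝ)‖ ≤ (k + n * |lam|) ^ n * |x| ^ k / k ! := by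
        rw [Real.norm_eq_abs, abs_div, abs_mul, abs_pow, Nat.abs_cast]
        gcongr
        simpa using abs_degFall_le lam k n
    _ ≤ n ! * Real.exp (k + n * |lam|) * |x| ^ k / k ! := by gcongr
    _ = n ! * Real.exp (n * |lam|) * ((Real.exp 1 * |x|) ^ k / k !) := by
        rw [Real.exp_add, mul_pow, ← Real.exp_nat_mul, mul_one]
        ring

lemma tsum_degFall_succ (lam x : ℝ) (n : ℕ) :
    ∑' k : ℕ, degFall lam k (n + 1) * x ^ k / k ! =
      x * ∑' k : ℕ, degFall lam (k + (1 - lam)) n * x ^ k / k ! := by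
  rw [(summable_degFall_mul_pow_div_factorial lam x (n + 1)).tsum_eq_zero_add, ← tsum_mul_left]
  simp only [Nat.cast_zero, degFall_succ_left lam 0, zero_mul, zero_div, zero_add]
  refine tsum_congr fun k => ?_
  rw [degFall_succ_left, Nat.factorial_succ]
  push_cast
  field_simp
  ring_nf

lemma tsum_degFall_add (lam c x : ℝ) (n : ℕ) :
    ∑' k : ℕ, degFall lam (k + c) n * x ^ k / k ! =
      ∑ m ∈ range (n + 1), (n.choose m : ℝ) * degFall lam c (n - m) *
        ∑' k : ℕ, degFall lam k m * x ^ k / k ! := by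
  have hexpand (k : ℕ) : degFall lam (k + c) n * x ^ k / k ! = ∑ m ∈ range (n + 1),
      (n.choose m : ℝ) * degFall lam c (n - m) * (degFall lam k m * x ^ k / k !) := by
    rw [degFall_add, sum_mul, sum_div]
    exact sum_congr rfl fun m _ => by ring
  rw [tsum_congr hexpand, Summable.tsum_finsetSum fun m _ =>
    (summable_degFall_mul_pow_div_factorial lam x m).mul_left _]
  exact sum_congr rfl fun m _ => tsum_mul_left

/-- `Bel_{n+1,λ}(x) = x ∑_{m=0}^n C(n,m) Bel_{m,λ}(x) (1)_{n-m+1,λ}`. -/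
theorem degenerate_bell_recurrence (lam : ℝ) (n : ℕ) (x : ℝ) :
    Bel lam x (n + 1) =
      x * ∑ m ∈ range (n + 1), (n.choose m : ℝ) * Bel lam x m * degFall lam 1 (n - m + 1) := by
  simp only [Bel, tsum_degFall_succ, tsum_degFall_add, mul_sum]
  refine sum_congr rfl fun m _ => ?_
  rw [degFall_succ_left lam 1]
  ring
end
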